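/- Let B be a separable metrizable topological group that is not σ-compact and whose underlying topological space is homeomorphic to an F_σ-subset (a countable union of closed sets) of a complete metric space. Then no subspace X of B having the Hurewicz property Ufin(O,Γ) generates B. -/

import Mathlib

/-!
Apply the Hurewicz property of `X` to the covers by preimages of the balls of radius `2⁻ⁿ` of `Y`
and let `F n` be the centres of the chosen finite subfamilies. Every point of `X` is eventually
within `2⁻ⁿ` of `F n`, so `X` is mapped into the union over `m` of the closed, totally bounded,
hence compact sets `⋂_{n ≥ m} ⋃_{p ∈ F n} closedBall p 2⁻ⁿ`. As `B` sits in `Y` as an `Fσ`, `X`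
then lies in a σ-compact subset of `B`. The subgroup generated by a σ-compact set `s` is the union
of the powers of the σ-compact set `s ∪ s⁻¹`, hence σ-compact, so it cannot be all of `B`.
-/
open Set Filter Topology

universe u

/-- `c` is an open cover of the space `X`. -/
def IsOpenCover {X : Type u} [TopologicalSpace X] (c : Set (Set X)) : Prop :=
  (∀ U ∈ c, IsOpen U) ∧ ⋃₀ c = Set.univ

/-- The Hurewicz property `Ufin(O,Γ)`. -/
def HurewiczProp (X : Type u) [TopologicalSpace X] : Prop :=
  ∀ c : ℕ → Set (Set X), (∀ n, IsOpenCover (c n)) →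
    ∃ v : ℕ → Set (Set X), (∀ n, v n ⊆ c n ∧ (v n).Finite) ∧
      ∀ x : X, ∀ᶠ n in atTop, x ∈ ⋃₀ v n

open scoped Pointwise

section Monoid

variable {G : Type*} [TopologicalSpace G] [Monoid G] [ContinuousMul G] {s t : Set G}

lemma IsSigmaCompact.mul (hs : IsSigmaCompact s) (ht : IsSigmaCompact t) :
    IsSigmaCompact (s * t) := by
  obtain ⟨K, hK, rfl⟩ := hs
  obtain ⟨L, hL, rfl⟩ := ht
  simp_rw [iUnion_mul, mul_iUnion]
  exact isSigmaCompact_iUnion _ fun i ↦ isSigmaCompact_iUnion _ fun j ↦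
    ((hK i).mul (hL j)).isSigmaCompact

lemma IsSigmaCompact.pow (hs : IsSigmaCompact s) : ∀ n : ℕ, IsSigmaCompact (s ^ n)
  | 0 => isCompact_singleton.isSigmaCompact
  | n + 1 => by rw [pow_succ]; exact (hs.pow n).mul hs

end Monoid

lemma Submonoid.coe_closure_eq_iUnion_pow {M : Type*} [Monoid M] (s : Set M) :
    (closure s : Set M) = ⋃ n : ℕ, s ^ n := by
  refine subset_antisymm (fun x hx ↦ ?_) (iUnion_subset fun n ↦ pow_subset subset_closure)
  induction hx using closure_induction with
  | mem x hx => exact mem_iUnion.2 ⟨1, by rwa [pow_one]⟩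
  | one => exact mem_iUnion.2 ⟨0, rfl⟩
  | mul x y _ _ hx hy =>
    obtain ⟨m, hx⟩ := mem_iUnion.1 hx
    obtain ⟨n, hy⟩ := mem_iUnion.1 hy
    exact mem_iUnion.2 ⟨m + n, pow_add s m n ▸ mul_mem_mul hx hy⟩

lemma IsSigmaCompact.subgroupClosure {G : Type*} [TopologicalSpace G] [Group G]
    [IsTopologicalGroup G] {s : Set G} (hs : IsSigmaCompact s) :
    IsSigmaCompact (Subgroup.closure s : Set G) := by
  have hinv : IsSigmaCompact s⁻¹ := by simpa using hs.image continuous_inv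
  have hunion : IsSigmaCompact (s ∪ s⁻¹) := by
    rw [union_eq_iUnion]
    exact isSigmaCompact_iUnion _ (Bool.forall_bool.2 ⟨hinv, hs⟩)
  rw [← Subgroup.coe_toSubmonoid, Subgroup.closure_toSubmonoid,
    Submonoid.coe_closure_eq_iUnion_pow]
  exact isSigmaCompact_iUnion _ hunion.pow

lemma IsSigmaCompact.inter_isClosed {X : Type*} [TopologicalSpace X] {s t : Set X}
    (hs : IsSigmaCompact s) (ht : IsClosed t) :
    IsSigmaCompact (s ∩ t) := by
  obtain ⟨K, hK, rfl⟩ := hs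
  rw [iUnion_inter]
  exact isSigmaCompact_iUnion_of_isCompact _ fun n ↦ (hK n).inter_right ht

lemma isCompact_iInter_biUnion_closedBall {Y : Type*} [PseudoMetricSpace Y] [CompleteSpace Y]
    {F : ℕ → Set Y} (hF : ∀ n, (F n).Finite) {r : ℕ → ℝ} (hr : Tendsto r atTop (𝓝 0))
    (m : ℕ) : IsCompact (⋂ n ≥ m, ⋃ p ∈ F n, Metric.closedBall p (r n)) := by
  refine TotallyBounded.isCompact_of_isClosed ?_ ?_
  · refine Metric.totallyBounded_iff.2 fun ε hε ↦ ?_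
    obtain ⟨n, hmn, hn⟩ := ((hr.eventually (gt_mem_nhds hε)).and (eventually_ge_atTop m)).exists
    refine ⟨F n, hF n, (biInter_subset_of_mem hn).trans (iUnion₂_mono fun p _ ↦ ?_)⟩
    exact Metric.closedBall_subset_ball hmn
  · exact isClosed_biInter fun n _ ↦ (hF n).isClosed_biUnion fun _ _ ↦ Metric.isClosed_closedBall

lemma HurewiczProp.exists_isSigmaCompact_range_subset {W : Type u} [TopologicalSpace W]
    {Y : Type*} [PseudoMetricSpace Y] [CompleteSpace Y] (hW : HurewiczProp W) {g : W → Y}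
    (hg : Continuous g) : ∃ S : Set Y, IsSigmaCompact S ∧ range g ⊆ S := by
  set r : ℕ → ℝ := fun n ↦ (1 / 2 : ℝ) ^ n
  have hr : Tendsto r atTop (𝓝 0) :=
    tendsto_pow_atTop_nhds_zero_of_lt_one (by norm_num) (by norm_num)
  have hcover : ∀ n, IsOpenCover (range fun p ↦ g ⁻¹' Metric.ball p (r n)) := fun n ↦
    ⟨forall_mem_range.2 fun p ↦ Metric.isOpen_ball.preimage hg,
      eq_univ_of_forall fun w ↦
        mem_sUnion.2 ⟨_, mem_range_self (g w), Metric.mem_ball_self (by positivity)⟩⟩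
  obtain ⟨v, hv, hv_tendsto⟩ := hW _ hcover
  have hcenters : ∀ n, ∃ F : Set Y, F.Finite ∧ (fun p ↦ g ⁻¹' Metric.ball p (r n)) '' F = v n :=
    fun n ↦ by
      obtain ⟨F, -, hF, hFv⟩ := exists_subset_image_finite_and (s := univ).1
        ⟨v n, by rw [image_univ]; exact (hv n).1, (hv n).2, rfl⟩
      exact ⟨F, hF, hFv.symm⟩
  choose F hF hFv using hcenters
  refine ⟨⋃ m, ⋂ n ≥ m, ⋃ p ∈ F n, Metric.closedBall p (r n),
    isSigmaCompact_iUnion_of_isCompact _ (isCompact_iInter_biUnion_closedBall hF hr), ?_⟩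
  rintro _ ⟨w, rfl⟩
  obtain ⟨m, hm⟩ := eventually_atTop.1 (hv_tendsto w)
  refine mem_iUnion.2 ⟨m, mem_iInter₂.2 fun n hn ↦ ?_⟩
  obtain ⟨_, ⟨p, hp, rfl⟩, hwp⟩ := hFv n ▸ hm n hn
  exact mem_biUnion hp (Metric.mem_closedBall'.2 (Metric.mem_ball'.1 hwp).le)

theorem stmt_9_general (B : Type u) [TopologicalSpace B] [Group B] [IsTopologicalGroup B]
    (hnotsc : ¬ ∃ K : ℕ → Set B, (∀ n, IsCompact (K n)) ∧ ⋃ n, K n = Set.univ)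
    (Y : Type u) [MetricSpace Y] [CompleteSpace Y]
    (T : ℕ → Set Y) (hT : ∀ n, IsClosed (T n)) (e : B ≃ₜ ↥(⋃ n, T n)) :
    ∀ X : Set B, HurewiczProp ↥X → Subgroup.closure X ≠ ⊤ := by
  intro X hX hgen
  set f : B → Y := Subtype.val ∘ e
  have hf : IsEmbedding f := IsEmbedding.subtypeVal.comp e.isEmbedding
  have hrange : range f = ⋃ n, T n := by
    rw [range_comp, e.range_coe, image_univ, Subtype.range_coe]
  obtain ⟨S, hS, hXS⟩ :=
    hX.exists_isSigmaCompact_range_subset (hf.continuous.comp continuous_subtype_val)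
  have hpre : IsSigmaCompact (f ⁻¹' S) := by
    rw [hf.isSigmaCompact_iff, image_preimage_eq_inter_range, hrange, inter_iUnion]
    exact isSigmaCompact_iUnion _ fun n ↦ hS.inter_isClosed (hT n)
  have hXpre : X ⊆ f ⁻¹' S := fun x hx ↦ hXS ⟨⟨x, hx⟩, rfl⟩
  have htop : Subgroup.closure (f ⁻¹' S) = ⊤ := top_le_iff.1 (hgen ▸ Subgroup.closure_mono hXpre)
  have hB := hpre.subgroupClosure
  rw [htop, Subgroup.coe_top] at hB
  exact hnotsc hB

/-- A separable metrizable non-σ-compact topological group homeomorphic to an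
`Fσ`-subset of a complete metric space is not generated by any of its Hurewicz
subspaces. -/
theorem stmt_9 (B : Type u) [TopologicalSpace B] [Group B] [IsTopologicalGroup B]
    [TopologicalSpace.SeparableSpace B] [TopologicalSpace.MetrizableSpace B]
    (hnotsc : ¬ ∃ K : ℕ → Set B, (∀ n, IsCompact (K n)) ∧ ⋃ n, K n = Set.univ)
    (Y : Type u) [MetricSpace Y] [CompleteSpace Y]
    (T : ℕ → Set Y) (hT : ∀ n, IsClosed (T n)) (e : B ≃ₜ ↥(⋃ n, T n)) :
    ∀ X : Set B, HurewiczProp ↥X → Subgroup.closure X ≠ ⊤ :=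
  stmt_9_general B hnotsc Y T hT e
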